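/- For every dimension d ≥ 3 there exist constants C > 0 and c > 0 such that for all T ≥ 1 and all t > 0, if (X_k)_{k≥0} is a simple random walk on ℤ^d started at 0 and N_T is an independent geometric random variable with P(N_T = k) = (1/(T+1))(T/(T+1))^k for k ≥ 0, then P( max_{0 ≤ i ≤ N_T} |X_i| ≥ t·⌊√T⌋ ) ≤ C·exp(−c·t^{2/3}). -/

import Mathlib

open MeasureTheory ProbabilityTheory Finset
open scoped ENNReal

noncomputable section

/-- The `2d` unit vectors `±eᵢ` in `ℤ^d`. -/
def stepSet (d : ℕ) : Finset (Fin d → ℤ) :=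
  (Finset.univ.image fun i : Fin d => Pi.single i (1 : ℤ)) ∪
    (Finset.univ.image fun i : Fin d => Pi.single i (-1 : ℤ))

/-- `IsSRW P d X x` : under the probability measure `P`, the process `X` is a simple random
walk on `ℤ^d` started at `x`: `X 0 = x`, the increments `X (k+1) - X k` are independent,
and each increment is uniformly distributed on the `2d` unit vectors `±eᵢ`. -/
def IsSRW {Ω : Type} [MeasurableSpace Ω] (P : Measure Ω) (d : ℕ)
    (X : ℕ → Ω → (Fin d → ℤ)) (x : Fin d → ℤ) : Prop :=
  (∀ ω, X 0 ω = x) ∧ (∀ k, Measurable (X k)) ∧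
    iIndepFun (fun k ω => X (k + 1) ω - X k ω) P ∧
    ∀ k, ∀ v ∈ stepSet d, P {ω | X (k + 1) ω - X k ω = v} = (2 * d : ℝ≥0∞)⁻¹

/-- `IsGeom P T N` : `N` is a geometric random variable with
`P(N = k) = (1/(T+1)) (T/(T+1))^k`. -/
def IsGeom {Ω : Type} [MeasurableSpace Ω] (P : Measure Ω) (T : ℝ) (N : Ω → ℕ) : Prop :=
  Measurable N ∧
    ∀ k : ℕ, P {ω | N ω = k} = ENNReal.ofReal ((1 / (T + 1)) * (T / (T + 1)) ^ k)

/-- `avoidProb d A n x` : probability that a simple random walk started at `x`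
stays out of `A` at all times `1, …, n`. -/
def avoidProb (d : ℕ) (A : Finset (Fin d → ℤ)) : ℕ → (Fin d → ℤ) → ℝ
  | 0, _ => 1
  | n + 1, x =>
      (2 * d : ℝ)⁻¹ * ∑ v ∈ stepSet d, if x + v ∈ A then 0 else avoidProb d A n (x + v)

/-- Escape probability `Es_A(x) = P_x(X_k ∉ A for all k ≥ 1)`, as the (decreasing) limit of
the finite–horizon avoidance probabilities. -/
def esc (d : ℕ) (A : Finset (Fin d → ℤ)) (x : Fin d → ℤ) : ℝ :=
  ⨅ n : ℕ, avoidProb d A n x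

/-- Capacity `cap(A) = ∑_{x ∈ A} Es_A(x)` of a finite set `A ⊂ ℤ^d`. -/
def cap (d : ℕ) (A : Finset (Fin d → ℤ)) : ℝ := ∑ x ∈ A, esc d A x

/-- Killed escape probability `Es_A^{(T)}(x) = P_x^{(T)}(X_k ∉ A for all 1 ≤ k ≤ N_T)`. -/
def escT (d : ℕ) (T : ℝ) (A : Finset (Fin d → ℤ)) (x : Fin d → ℤ) : ℝ :=
  ∑' n : ℕ, (1 / (T + 1)) * (T / (T + 1)) ^ n * avoidProb d A n x

/-- `T`-capacity `cap^{(T)}(A) = ∑_{x ∈ A} Es_A^{(T)}(x)`. -/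
def capT (d : ℕ) (T : ℝ) (A : Finset (Fin d → ℤ)) : ℝ := ∑ x ∈ A, escT d T A x

/-- `F_d(a)`: `√a` for `d = 3`, `a / log a` for `d = 4`, and `a` for `d ≥ 5`. -/
def Fd (d : ℕ) (a : ℝ) : ℝ :=
  if d = 3 then Real.sqrt a else if d = 4 then a / Real.log a else a

/-- The ℓ∞ norm of a point of `ℤ^d`, as a real number. -/
def linf {d : ℕ} (x : Fin d → ℤ) : ℝ :=
  ((Finset.univ.sup fun j => (x j).natAbs : ℕ) : ℝ)

/-- `n_T = ⌊√T⌋`. -/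
def nT (T : ℝ) : ℕ := Nat.floor (Real.sqrt T)

/-- The range `{X_0, …, X_m}` of a walk, as a finite subset of `ℤ^d`. -/
def walkRange {Ω : Type} {d : ℕ} (X : ℕ → Ω → (Fin d → ℤ)) (m : ℕ) (ω : Ω) :
    Finset (Fin d → ℤ) :=
  (Finset.range (m + 1)).image fun k => X k ω

/-!
Run the walk for `m = ⌈t^{2/3} T⌉` steps. The killing time exceeds `m` with probability
`(T/(T+1))^{m+1} ≤ e^{-t^{2/3}/2}`. Before time `m`, each coordinate of `X_m - X_k` is a sum of
at most `m` independent, centred increments bounded by `1`, hence sub-Gaussian with variance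
proxy `m` (Hoeffding), so `P(|X_m - X_k| ≥ α) ≤ 2d e^{-α²/2m}`; Ottaviani's inequality turns
this into the same bound, doubled, for `max_{i ≤ m} |X_i| ≥ 2α`. With `α = t⌊√T⌋/2 ≳ t√T` the
exponent is `≳ t² T / (t^{2/3} T) = t^{4/3} ≥ t^{2/3}`.
-/

open scoped NNReal

section Lattice

variable {d : ℕ}

lemma linf_le_linf_add_linf_sub (x y : Fin d → ℤ) : linf x ≤ linf y + linf (y - x) := by
  unfold linf
  rw [← Nat.cast_add, Nat.cast_le]
  refine Finset.sup_le fun j _ => ?_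
  calc (x j).natAbs = (y j - (y j - x j)).natAbs := by rw [sub_sub_cancel]
    _ ≤ (y j).natAbs + (y j - x j).natAbs := Int.natAbs_sub_le _ _
    _ ≤ _ := add_le_add (Finset.le_sup (f := fun j => (y j).natAbs) (Finset.mem_univ j))
        (Finset.le_sup (f := fun j => ((y - x) j).natAbs) (Finset.mem_univ j))

lemma exists_le_abs_of_le_linf {x : Fin d → ℤ} {α : ℝ} (hα : 0 < α) (h : α ≤ linf x) :
    ∃ j, α ≤ |(x j : ℝ)| := by
  rcases (Finset.univ : Finset (Fin d)).eq_empty_or_nonempty with he | hne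
  · simp only [linf, he, Finset.sup_empty] at h
    exact absurd h (not_le.2 (by simpa using hα))
  obtain ⟨j, -, hj⟩ := Finset.exists_mem_eq_sup _ hne fun j => (x j).natAbs
  refine ⟨j, ?_⟩
  rwa [linf, hj, Nat.cast_natAbs, Int.cast_abs] at h

lemma single_eq_single_iff {i j : Fin d} {a b : ℤ} (ha : a ≠ 0) :
    (Pi.single i a : Fin d → ℤ) = Pi.single j b ↔ i = j ∧ a = b := by
  refine ⟨fun h => ?_, fun ⟨hij, hab⟩ => hij ▸ hab ▸ rfl⟩
  have hi := congrFun h i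
  by_cases hij : i = j
  · subst hij
    simpa using hi
  · simp [Pi.single_eq_of_ne hij, ha] at hi

lemma card_stepSet : (stepSet d).card = 2 * d := by
  have hinj {a : ℤ} (ha : a ≠ 0) : Function.Injective fun i : Fin d => (Pi.single i a : Fin d → ℤ) :=
    fun _ _ h => ((single_eq_single_iff ha).1 h).1
  rw [stepSet, Finset.card_union_of_disjoint (by simp [Finset.disjoint_left, single_eq_single_iff]),
    Finset.card_image_of_injective _ (hinj one_ne_zero),
    Finset.card_image_of_injective _ (hinj (by norm_num))]
  simp [two_mul]

lemma coord_eq_of_mem_stepSet {v : Fin d → ℤ} (hv : v ∈ stepSet d) (j : Fin d) :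
    (v j : ℝ) = (if v = Pi.single j 1 then 1 else 0) - (if v = Pi.single j (-1) then 1 else 0) := by
  simp only [stepSet, Finset.mem_union, Finset.mem_image, Finset.mem_univ, true_and] at hv
  rcases hv with ⟨i, rfl⟩ | ⟨i, rfl⟩ <;> by_cases hij : i = j
  all_goals simp [single_eq_single_iff, hij]

end Lattice

section IndependentIncrements

variable {Ω : Type} [MeasurableSpace Ω] {P : Measure Ω} {d : ℕ} {X : ℕ → Ω → (Fin d → ℤ)}

lemma indepFun_path_sub (hX0 : ∀ ω, X 0 ω = 0) (hXm : ∀ k, Measurable (X k))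
    (hind : iIndepFun (fun k ω => X (k + 1) ω - X k ω) P) {k m : ℕ} (hkm : k ≤ m) :
    IndepFun (fun ω (j : Fin (k + 1)) => X j ω) (fun ω => X m ω - X k ω) P := by
  have hdisj : Disjoint (Finset.range k) (Finset.Ico k m) := by
    simp only [Finset.disjoint_left, Finset.mem_range, Finset.mem_Ico]
    omega
  have H := (hind.indepFun_finset _ _ hdisj fun i => (hXm _).sub (hXm _)).comp
    (φ := fun g (j : Fin (k + 1)) => ∑ i : Finset.range k, if (i : ℕ) < j then g i else 0)
    (ψ := fun g => ∑ i : Finset.Ico k m, g i) Measurable.of_discrete Measurable.of_discrete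
  convert H using 1
  · funext ω j
    have hfilter : (Finset.range k).filter (· < (j : ℕ)) = Finset.range j := by
      ext i
      simp only [Finset.mem_filter, Finset.mem_range]
      omega
    simp only [Function.comp_apply]
    rw [Finset.sum_coe_sort (Finset.range k) fun i => if i < j then X (i + 1) ω - X i ω else 0,
      ← Finset.sum_filter, hfilter, Finset.sum_range_sub (X · ω), hX0, sub_zero]
  · funext ω
    rw [Function.comp_apply, Finset.sum_coe_sort (Finset.Ico k m) fun i => X (i + 1) ω - X i ω,
      Finset.sum_Ico_sub (X · ω) hkm]

end IndependentIncrements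

section FirstPassage

variable {Ω : Type} {d : ℕ} {X : ℕ → Ω → (Fin d → ℤ)} {r : ℝ}

def firstPassage (X : ℕ → Ω → (Fin d → ℤ)) (r : ℝ) (k : ℕ) : Set Ω :=
  {ω | r ≤ linf (X k ω) ∧ ∀ j < k, linf (X j ω) < r}

lemma firstPassage_eq_preimage (k : ℕ) :
    firstPassage X r k = (fun ω (j : Fin (k + 1)) => X j ω) ⁻¹'
      {x | r ≤ linf (x (Fin.last k)) ∧ ∀ j : Fin (k + 1), (j : ℕ) < k → linf (x j) < r} := by
  ext ω
  simp only [firstPassage, Set.mem_ofPred_eq, Set.mem_preimage, Fin.val_last]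
  refine and_congr Iff.rfl ⟨fun h j hj => h j hj, fun h j hj => h ⟨j, by omega⟩ hj⟩

lemma pairwise_disjoint_firstPassage :
    Pairwise fun k l => Disjoint (firstPassage X r k) (firstPassage X r l) := by
  intro k l hkl
  refine Set.disjoint_left.2 fun ω hk hl => ?_
  rcases hkl.lt_or_gt with h | h
  · exact (hl.2 k h).not_ge hk.1
  · exact (hk.2 l h).not_ge hl.1

lemma exists_mem_firstPassage {ω : Ω} {m : ℕ} (h : ∃ i ≤ m, r ≤ linf (X i ω)) :
    ∃ k ≤ m, ω ∈ firstPassage X r k := by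
  classical
  have hex : ∃ i, r ≤ linf (X i ω) := h.imp fun _ => And.right
  obtain ⟨i, him, hi⟩ := h
  exact ⟨Nat.find hex, (Nat.find_min' hex hi).trans him, Nat.find_spec hex,
    fun j hj => not_le.1 (Nat.find_min hex hj)⟩

variable [MeasurableSpace Ω] {P : Measure Ω}

lemma measurableSet_firstPassage (hXm : ∀ k, Measurable (X k)) (k : ℕ) :
    MeasurableSet (firstPassage X r k) := by
  rw [firstPassage_eq_preimage]
  exact measurable_pi_lambda (fun ω (j : Fin (k + 1)) => X j ω) (fun j => hXm j)
    MeasurableSet.of_discrete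

lemma measureReal_firstPassage_inter (hX0 : ∀ ω, X 0 ω = 0) (hXm : ∀ k, Measurable (X k))
    (hind : iIndepFun (fun k ω => X (k + 1) ω - X k ω) P) {k m : ℕ} (hkm : k ≤ m) (α : ℝ) :
    P.real (firstPassage X r k ∩ {ω | α ≤ linf (X m ω - X k ω)}) =
      P.real (firstPassage X r k) * P.real {ω | α ≤ linf (X m ω - X k ω)} := by
  rw [measureReal_def, measureReal_def, measureReal_def, ← ENNReal.toReal_mul,
    firstPassage_eq_preimage]
  exact congrArg ENNReal.toReal ((indepFun_path_sub hX0 hXm hind hkm).measure_inter_preimage_eq_mul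
    _ {y | α ≤ linf y} MeasurableSet.of_discrete MeasurableSet.of_discrete)

/-- **Ottaviani's maximal inequality**. -/
theorem measureReal_exists_le_linf_le [IsProbabilityMeasure P] (hX0 : ∀ ω, X 0 ω = 0)
    (hXm : ∀ k, Measurable (X k)) (hind : iIndepFun (fun k ω => X (k + 1) ω - X k ω) P)
    {m : ℕ} {α q : ℝ} (hq : ∀ k ≤ m, P.real {ω | α ≤ linf (X m ω - X k ω)} ≤ q) :
    P.real {ω | ∃ i ≤ m, 2 * α ≤ linf (X i ω)} ≤ 2 * q := by
  set A := firstPassage X (2 * α)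
  set B : ℕ → Set Ω := fun k => {ω | α ≤ linf (X m ω - X k ω)}
  have hsub : {ω | ∃ i ≤ m, 2 * α ≤ linf (X i ω)} ⊆
      B 0 ∪ ⋃ k ∈ Finset.range (m + 1), A k ∩ B k := by
    intro ω hω
    obtain ⟨k, hkm, hA⟩ := exists_mem_firstPassage hω
    by_cases h0 : ω ∈ B 0
    · exact Or.inl h0
    refine Or.inr (Set.mem_biUnion (Finset.mem_range.2 (Nat.lt_succ_of_le hkm)) ⟨hA, ?_⟩)
    simp only [B, Set.mem_ofPred_eq, hX0, sub_zero, not_le] at h0 ⊢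
    linarith [linf_le_linf_add_linf_sub (X k ω) (X m ω), hA.1]
  have hA_disj : Set.PairwiseDisjoint ↑(Finset.range (m + 1)) A :=
    (pairwise_disjoint_firstPassage (X := X)).set_pairwise _
  calc P.real {ω | ∃ i ≤ m, 2 * α ≤ linf (X i ω)}
      ≤ P.real (B 0) + ∑ k ∈ Finset.range (m + 1), P.real (A k ∩ B k) :=
        (measureReal_mono hsub).trans <| (measureReal_union_le _ _).trans <|
          add_le_add le_rfl (measureReal_biUnion_finset_le _ _)
    _ = P.real (B 0) + ∑ k ∈ Finset.range (m + 1), P.real (A k) * P.real (B k) := by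
        congr 1
        refine Finset.sum_congr rfl fun k hk => ?_
        exact measureReal_firstPassage_inter hX0 hXm hind
          (Nat.le_of_lt_succ (Finset.mem_range.1 hk)) α
    _ ≤ q + ∑ k ∈ Finset.range (m + 1), P.real (A k) * q := by
        gcongr with k hk
        · exact hq 0 (Nat.zero_le m)
        · exact hq k (Nat.le_of_lt_succ (Finset.mem_range.1 hk))
    _ = q + P.real (⋃ k ∈ Finset.range (m + 1), A k) * q := by
        rw [← Finset.sum_mul, measureReal_biUnion_finset hA_disj
          fun k _ => measurableSet_firstPassage hXm k]
    _ ≤ q + 1 * q := by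
        gcongr
        · exact (measureReal_nonneg).trans (hq 0 (Nat.zero_le m))
        · exact measureReal_le_one
    _ = 2 * q := by ring

end FirstPassage

section SubGaussian

variable {Ω : Type} [MeasurableSpace Ω] {P : Measure Ω}

lemma ProbabilityTheory.HasSubgaussianMGF.mono {Y : Ω → ℝ} {c c' : ℝ≥0}
    (h : HasSubgaussianMGF Y c P) (hc : c ≤ c') : HasSubgaussianMGF Y c' P :=
  ⟨h.integrable_exp_mul, fun t => (h.mgf_le t).trans (Real.exp_le_exp.2 (by gcongr))⟩

lemma ProbabilityTheory.HasSubgaussianMGF.measure_abs_ge_le [IsFiniteMeasure P] {Y : Ω → ℝ}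
    {c : ℝ≥0} (h : HasSubgaussianMGF Y c P) {ε : ℝ} (hε : 0 ≤ ε) :
    P.real {ω | ε ≤ |Y ω|} ≤ 2 * Real.exp (-ε ^ 2 / (2 * c)) := by
  have hsub : {ω | ε ≤ |Y ω|} ⊆ {ω | ε ≤ Y ω} ∪ {ω | ε ≤ (-Y) ω} := fun ω hω => by
    rcases (le_abs' (a := ε) (b := Y ω)).1 hω with h | h
    exacts [Or.inr (show ε ≤ -Y ω by linarith), Or.inl h]
  calc P.real {ω | ε ≤ |Y ω|} ≤ P.real {ω | ε ≤ Y ω} + P.real {ω | ε ≤ (-Y) ω} :=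
        (measureReal_mono hsub).trans (measureReal_union_le _ _)
    _ ≤ _ := by linarith [h.measure_ge_le hε, h.neg.measure_ge_le hε]

lemma measureReal_le_linf_le [IsFiniteMeasure P] {d : ℕ} {Y : Ω → (Fin d → ℤ)} {c : ℝ≥0}
    (h : ∀ j, HasSubgaussianMGF (fun ω => (Y ω j : ℝ)) c P) {α : ℝ} (hα : 0 < α) :
    P.real {ω | α ≤ linf (Y ω)} ≤ 2 * d * Real.exp (-α ^ 2 / (2 * c)) := by
  have hsub : {ω | α ≤ linf (Y ω)} ⊆ ⋃ j, {ω | α ≤ |(Y ω j : ℝ)|} := fun ω hω =>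
    Set.mem_iUnion.2 (exists_le_abs_of_le_linf hα hω)
  calc P.real {ω | α ≤ linf (Y ω)} ≤ ∑ j, P.real {ω | α ≤ |(Y ω j : ℝ)|} :=
        (measureReal_mono hsub).trans (measureReal_iUnion_fintype_le _)
    _ ≤ ∑ _j : Fin d, 2 * Real.exp (-α ^ 2 / (2 * c)) :=
        Finset.sum_le_sum fun j _ => (h j).measure_abs_ge_le hα.le
    _ = 2 * d * Real.exp (-α ^ 2 / (2 * c)) := by simp; ring

end SubGaussian

namespace IsSRW

variable {Ω : Type} [MeasurableSpace Ω] {P : Measure Ω} {d : ℕ} {X : ℕ → Ω → (Fin d → ℤ)}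
  {x : Fin d → ℤ}

lemma measurable_incr (hX : IsSRW P d X x) (k : ℕ) :
    Measurable fun ω => X (k + 1) ω - X k ω :=
  (hX.2.1 _).sub (hX.2.1 _)

variable [IsProbabilityMeasure P]

lemma ae_mem_stepSet (hX : IsSRW P d X x) (hd : d ≠ 0) (k : ℕ) :
    ∀ᵐ ω ∂P, X (k + 1) ω - X k ω ∈ stepSet d := by
  have hξ := hX.measurable_incr k
  change ∀ᵐ ω ∂P, ω ∈ (fun ω => X (k + 1) ω - X k ω) ⁻¹' ↑(stepSet d)
  rw [ae_mem_iff_measure_eq (hξ MeasurableSet.of_discrete).nullMeasurableSet, measure_univ]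
  rw [← sum_measure_preimage_singleton _ fun v _ => hξ (measurableSet_singleton v)]
  refine (Finset.sum_congr rfl fun v hv => hX.2.2.2 k v hv).trans ?_
  rw [Finset.sum_const, card_stepSet, nsmul_eq_mul]
  push_cast
  exact ENNReal.mul_inv_cancel (by simp [hd]) (by finiteness)

lemma integral_incr_coord (hX : IsSRW P d X x) (hd : d ≠ 0) (k : ℕ) (j : Fin d) :
    ∫ ω, ((X (k + 1) ω - X k ω) j : ℝ) ∂P = 0 := by
  set ξ := fun ω => X (k + 1) ω - X k ω
  have hξ : Measurable ξ := hX.measurable_incr k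
  have hfiber : ∀ v, MeasurableSet {ω | ξ ω = v} := fun v => hξ (measurableSet_singleton v)
  have hlaw : ∀ v ∈ stepSet d, P.real {ω | ξ ω = v} = ((2 * d : ℝ≥0∞)⁻¹).toReal := fun v hv => by
    rw [measureReal_def, hX.2.2.2 k v hv]
  have hae : (fun ω => (ξ ω j : ℝ)) =ᵐ[P]
      fun ω => {ω | ξ ω = Pi.single j 1}.indicator 1 ω -
        {ω | ξ ω = Pi.single j (-1)}.indicator 1 ω := by
    filter_upwards [hX.ae_mem_stepSet hd k] with ω (hω : ξ ω ∈ stepSet d)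
    simp [coord_eq_of_mem_stepSet hω j, Set.indicator_apply]
  rw [integral_congr_ae hae, integral_sub ((integrable_const 1).indicator (hfiber _))
    ((integrable_const 1).indicator (hfiber _)), integral_indicator_one (hfiber _),
    integral_indicator_one (hfiber _), hlaw _ (by simp [stepSet]), hlaw _ (by simp [stepSet]),
    sub_self]

lemma hasSubgaussianMGF_incr_coord (hX : IsSRW P d X x) (hd : d ≠ 0) (k : ℕ) (j : Fin d) :
    HasSubgaussianMGF (fun ω => ((X (k + 1) ω - X k ω) j : ℝ)) 1 P := by
  have hbound : ∀ᵐ ω ∂P, ((X (k + 1) ω - X k ω) j : ℝ) ∈ Set.Icc (-1) 1 := by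
    filter_upwards [hX.ae_mem_stepSet hd k] with ω hω
    rw [coord_eq_of_mem_stepSet hω j]
    constructor <;> split_ifs <;> norm_num
  have hmeas : Measurable fun ω => ((X (k + 1) ω - X k ω) j : ℝ) :=
    (Measurable.of_discrete (f := fun v : Fin d → ℤ => (v j : ℝ))).comp (hX.measurable_incr k)
  convert hasSubgaussianMGF_of_mem_Icc_of_integral_eq_zero hmeas.aemeasurable hbound
    (hX.integral_incr_coord hd k j)
  norm_num

lemma hasSubgaussianMGF_sub_coord (hX : IsSRW P d X x) (hd : d ≠ 0) {k m : ℕ} (hkm : k ≤ m)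
    (j : Fin d) : HasSubgaussianMGF (fun ω => ((X m ω - X k ω) j : ℝ)) (m - k : ℕ) P := by
  have hind : iIndepFun (fun i ω => ((X (i + 1) ω - X i ω) j : ℝ)) P :=
    hX.2.2.1.comp (fun _ v => (v j : ℝ)) fun _ => Measurable.of_discrete
  convert HasSubgaussianMGF.sum_of_iIndepFun hind (s := Finset.Ico k m)
    fun i _ => hX.hasSubgaussianMGF_incr_coord hd i j using 1
  · funext ω
    rw [← Finset.sum_Ico_sub (X · ω) hkm]
    simp [Finset.sum_apply]
  · simp

lemma measureReal_le_linf_sub_le (hX : IsSRW P d X x) (hd : d ≠ 0) {k m : ℕ} (hkm : k ≤ m)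
    {α : ℝ} (hα : 0 < α) :
    P.real {ω | α ≤ linf (X m ω - X k ω)} ≤ 2 * d * Real.exp (-α ^ 2 / (2 * m)) := by
  have := measureReal_le_linf_le (fun j => (hX.hasSubgaussianMGF_sub_coord hd hkm j).mono
    (Nat.cast_le.2 (Nat.sub_le m k))) hα
  simpa using this

theorem measureReal_exists_two_mul_le_linf_le (hX : IsSRW P d X 0) (hd : d ≠ 0) {α : ℝ}
    (hα : 0 < α) (m : ℕ) :
    P.real {ω | ∃ i ≤ m, 2 * α ≤ linf (X i ω)} ≤ 4 * d * Real.exp (-α ^ 2 / (2 * m)) := by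
  have := measureReal_exists_le_linf_le (m := m) hX.1 hX.2.1 hX.2.2.1
    fun k hk => hX.measureReal_le_linf_sub_le hd hk hα
  linarith

end IsSRW

namespace IsGeom

variable {Ω : Type} [MeasurableSpace Ω] {P : Measure Ω} [IsProbabilityMeasure P] {T : ℝ}
  {N : Ω → ℕ}

lemma measureReal_lt (hN : IsGeom P T N) (hT : 0 ≤ T) (m : ℕ) :
    P.real {ω | m < N ω} = (T / (T + 1)) ^ (m + 1) := by
  have hfiber : ∀ k : ℕ, MeasurableSet {ω | N ω = k} := fun k => hN.1 (measurableSet_singleton k)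
  have hlaw : ∀ k : ℕ, P.real {ω | N ω = k} = (1 - T / (T + 1)) * (T / (T + 1)) ^ k := by
    intro k
    rw [measureReal_def, hN.2, ENNReal.toReal_ofReal (by positivity)]
    field_simp
    ring
  have hcompl : {ω | m < N ω} = (⋃ k ∈ Finset.range (m + 1), {ω | N ω = k})ᶜ := by
    ext ω
    simp only [Set.mem_ofPred_eq, Set.mem_compl_iff, Set.mem_iUnion, Finset.mem_range, not_exists]
    exact ⟨fun h k hk hNk => by omega, fun h => not_le.1 fun hle => h _ (by omega) rfl⟩
  have hdisj : Set.PairwiseDisjoint ↑(Finset.range (m + 1)) fun k : ℕ => {ω | N ω = k} :=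
    fun k _ l _ hkl => Set.disjoint_left.2 fun ω hk hl => hkl (hk.symm.trans hl)
  rw [hcompl, measureReal_compl (Finset.measurableSet_biUnion _ fun k _ => hfiber k),
    probReal_univ, measureReal_biUnion_finset hdisj fun k _ => hfiber k,
    Finset.sum_congr rfl fun k _ => hlaw k, ← Finset.mul_sum, mul_neg_geom_sum, sub_sub_cancel]

lemma measureReal_lt_le_exp (hN : IsGeom P T N) (hT : 0 ≤ T) (m : ℕ) :
    P.real {ω | m < N ω} ≤ Real.exp (-m / (T + 1)) := by
  have hr : T / (T + 1) ≤ Real.exp (-1 / (T + 1)) := by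
    have := Real.add_one_le_exp (-1 / (T + 1))
    rwa [div_add_one (by positivity), neg_add_eq_sub, add_sub_cancel_right] at this
  have hr0 : 0 ≤ T / (T + 1) := by positivity
  calc P.real {ω | m < N ω} = T / (T + 1) * (T / (T + 1)) ^ m := by
        rw [hN.measureReal_lt hT, pow_succ']
    _ ≤ 1 * Real.exp (-1 / (T + 1)) ^ m := by
        gcongr
        exact (div_le_one (by positivity)).2 (by linarith)
    _ = Real.exp (-m / (T + 1)) := by
        rw [one_mul, ← Real.exp_nat_mul]
        ring_nf

end IsGeom

lemma sqrt_div_two_le_nT {T : ℝ} (hT : 1 ≤ T) : Real.sqrt T / 2 ≤ nT T := by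
  have h1 : 1 ≤ Real.sqrt T := Real.one_le_sqrt.2 hT
  have h2 : (1 : ℝ) ≤ nT T := by exact_mod_cast Nat.le_floor (by exact_mod_cast h1)
  linarith [Nat.lt_floor_add_one (Real.sqrt T), show (nT T : ℝ) = ⌊Real.sqrt T⌋₊ from rfl]

lemma div_le_sq_div_ceil {T t : ℝ} (hT : 1 ≤ T) (ht : 1 ≤ t) :
    t ^ ((2 : ℝ) / 3) / 64 ≤ (t * nT T / 2) ^ 2 / (2 * ⌈t ^ ((2 : ℝ) / 3) * T⌉₊) := by
  set u := t ^ ((2 : ℝ) / 3)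
  have hu1 : 1 ≤ u := Real.one_le_rpow ht (by norm_num)
  have hu3 : u ^ 3 = t ^ 2 := by
    rw [← Real.rpow_natCast, ← Real.rpow_mul (by linarith)]
    norm_num
  have huT : 1 ≤ u * T := one_le_mul_of_one_le_of_one_le hu1 hT
  have hm : (⌈u * T⌉₊ : ℝ) ≤ 2 * u * T := by
    linarith [Nat.ceil_lt_add_one (by linarith : 0 ≤ u * T)]
  have hm0 : (0 : ℝ) < ⌈u * T⌉₊ := by
    exact_mod_cast Nat.ceil_pos.2 (by linarith)
  have hα : t * Real.sqrt T / 4 ≤ t * nT T / 2 := by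
    nlinarith [sqrt_div_two_le_nT hT]
  rw [le_div_iff₀ (by positivity)]
  calc u / 64 * (2 * ⌈u * T⌉₊) ≤ u / 64 * (4 * u * T) :=
        mul_le_mul_of_nonneg_left (by linarith) (by positivity)
    _ = u ^ 2 * T / 16 := by ring
    _ ≤ u ^ 3 * T / 16 := by gcongr; norm_num
    _ = (t * Real.sqrt T / 4) ^ 2 := by
        rw [hu3, div_pow, mul_pow, Real.sq_sqrt (by linarith)]
        ring
    _ ≤ (t * nT T / 2) ^ 2 := by gcongr

theorem IsSRW.measureReal_exists_le_linf_le_of_isGeom {Ω : Type} [MeasurableSpace Ω]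
    {P : Measure Ω} [IsProbabilityMeasure P] {d : ℕ} {X : ℕ → Ω → (Fin d → ℤ)} {N : Ω → ℕ}
    {T t : ℝ} (hX : IsSRW P d X 0) (hd : d ≠ 0) (hN : IsGeom P T N) (hT : 1 ≤ T) (ht : 1 ≤ t) :
    P.real {ω | ∃ i ≤ N ω, t * nT T ≤ linf (X i ω)} ≤
      (4 * d + 1) * Real.exp (-t ^ ((2 : ℝ) / 3) / 64) := by
  set u := t ^ ((2 : ℝ) / 3)
  set m := ⌈u * T⌉₊
  have hu : 0 ≤ u := by positivity
  have hsub : {ω | ∃ i ≤ N ω, t * nT T ≤ linf (X i ω)} ⊆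
      {ω | ∃ i ≤ m, 2 * (t * nT T / 2) ≤ linf (X i ω)} ∪ {ω | m < N ω} := by
    rintro ω ⟨i, hiN, hi⟩
    by_cases hNm : N ω ≤ m
    · exact Or.inl ⟨i, hiN.trans hNm, by linarith⟩
    · exact Or.inr (not_le.1 hNm)
  have hgeom : u / 64 ≤ m / (T + 1) := by
    rw [div_le_div_iff₀ (by norm_num) (by linarith)]
    nlinarith [Nat.le_ceil (u * T)]
  have hnT : (0 : ℝ) < nT T :=
    lt_of_lt_of_le (by positivity [Real.sqrt_pos.2 (by linarith : 0 < T)]) (sqrt_div_two_le_nT hT)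
  calc P.real {ω | ∃ i ≤ N ω, t * nT T ≤ linf (X i ω)}
      ≤ P.real {ω | ∃ i ≤ m, 2 * (t * nT T / 2) ≤ linf (X i ω)} + P.real {ω | m < N ω} :=
        (measureReal_mono hsub).trans (measureReal_union_le _ _)
    _ ≤ 4 * d * Real.exp (-(t * nT T / 2) ^ 2 / (2 * m)) + Real.exp (-m / (T + 1)) :=
        add_le_add (hX.measureReal_exists_two_mul_le_linf_le hd (by positivity) m)
          (hN.measureReal_lt_le_exp (by linarith) m)
    _ ≤ 4 * d * Real.exp (-u / 64) + Real.exp (-u / 64) := by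
        simp only [neg_div]
        gcongr 4 * d * Real.exp (-?_) + Real.exp (-?_)
        exact div_le_sq_div_ceil hT ht
    _ = (4 * d + 1) * Real.exp (-u / 64) := by ring

/-- For every `d ≥ 3` there are `C, c > 0` such that for all `T ≥ 1` and `t > 0`,
a simple random walk on `ℤ^d` started at `0`, killed at an independent geometric time `N_T`,
satisfies `P(max_{0 ≤ i ≤ N_T} |X_i| ≥ t ⌊√T⌋) ≤ C exp(−c t^{2/3})`. -/
theorem stmt0 :
    ∀ d : ℕ, 3 ≤ d → ∃ C c : ℝ, 0 < C ∧ 0 < c ∧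
      ∀ T : ℝ, 1 ≤ T → ∀ t : ℝ, 0 < t →
      ∀ (Ω : Type) [MeasurableSpace Ω] (P : Measure Ω) [IsProbabilityMeasure P]
        (X : ℕ → Ω → (Fin d → ℤ)) (N : Ω → ℕ),
        IsSRW P d X 0 → IsGeom P T N →
        IndepFun (fun ω k => X k ω) N P →
        P {ω | ∃ i ≤ N ω, t * (nT T : ℝ) ≤ linf (X i ω)} ≤
          ENNReal.ofReal (C * Real.exp (-c * t ^ ((2 : ℝ) / 3))) := by
  intro d hd
  refine ⟨(4 * d + 1) * Real.exp (1 / 64), 1 / 64, by positivity, by norm_num, ?_⟩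
  intro T hT t ht Ω _ P _ X N hX hN _
  set u := t ^ ((2 : ℝ) / 3)
  have hC : (4 * d + 1) * Real.exp (1 / 64) * Real.exp (-(1 / 64) * u) =
      (4 * d + 1) * Real.exp ((1 - u) / 64) := by
    rw [mul_assoc, ← Real.exp_add]
    ring_nf
  rw [← ofReal_measureReal, hC]
  refine ENNReal.ofReal_le_ofReal ?_
  rcases le_or_gt t 1 with ht1 | ht1
  · have hu : u ≤ 1 := Real.rpow_le_one ht.le ht1 (by norm_num)
    calc P.real _ ≤ 1 := measureReal_le_one
      _ ≤ (4 * d + 1) * Real.exp ((1 - u) / 64) := by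
        nlinarith [Real.one_le_exp (by linarith : 0 ≤ (1 - u) / 64)]
  · calc P.real _ ≤ (4 * d + 1) * Real.exp (-u / 64) :=
          hX.measureReal_exists_le_linf_le_of_isGeom (by omega) hN hT ht1.le
      _ ≤ (4 * d + 1) * Real.exp ((1 - u) / 64) := by gcongr; linarith

end
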